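/- Let Π be a numerical semigroup and let Λ = Π ∖ {σ} and Λ′ = Π ∖ {σ′} be two children of Π (σ, σ′ right generators of Π) with F(Λ′) < F(Λ). If, for some integer γ, Λ′ has no descendant of genus γ, then Λ has no descendant of genus γ. -/

import Mathlib

open Pointwise

namespace NumSgpPaper

/-- `S` is a numerical semigroup: an additive submonoid of ℕ with finite complement. -/
structure IsNumSgp (S : Set ℕ) : Prop where
  zero_mem : 0 ∈ S
  add_mem : ∀ ⦃a b : ℕ⦄, a ∈ S → b ∈ S → a + b ∈ S
  cofinite : Sᶜ.Finite

/-- The Frobenius number: the largest gap of `S` (junk value `0` if there are no gaps). -/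
noncomputable def frob (S : Set ℕ) : ℕ := sSup Sᶜ

open Classical in
/-- The conductor: one plus the largest gap, and `0` if there are no gaps (so `c(ℕ) = 0`). -/
noncomputable def conductor (S : Set ℕ) : ℕ := if Sᶜ = ∅ then 0 else frob S + 1

/-- The genus: the number of gaps. -/
noncomputable def genus (S : Set ℕ) : ℕ := Sᶜ.ncard

/-- The multiplicity: the smallest positive element. -/
noncomputable def mult (S : Set ℕ) : ℕ := sInf {n : ℕ | n ∈ S ∧ 0 < n}

/-- The jump: the difference between the second and first positive elements. -/
noncomputable def jump (S : Set ℕ) : ℕ := sInf {n : ℕ | n ∈ S ∧ mult S < n} - mult S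

/-- A minimal generator: a positive element of `S` that is not the sum of
two positive elements of `S`. -/
def IsMinGen (S : Set ℕ) (x : ℕ) : Prop :=
  0 < x ∧ x ∈ S ∧ ¬ ∃ a b : ℕ, 0 < a ∧ 0 < b ∧ a ∈ S ∧ b ∈ S ∧ a + b = x

/-- A right generator: a minimal generator larger than the Frobenius number. -/
def IsRightGen (S : Set ℕ) (x : ℕ) : Prop := IsMinGen S x ∧ frob S < x

/-- A strong generator: a right generator `σ` such that `σ + m(S)` is a minimal
generator of `S \ {σ}`. -/
def IsStrongGen (S : Set ℕ) (σ : ℕ) : Prop :=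
  IsRightGen S σ ∧ IsMinGen (S \ {σ}) (σ + mult S)

/-- `S` is ordinary when its gaps are exactly `{1, …, g(S)}`. -/
def IsOrdinary (S : Set ℕ) : Prop := Sᶜ = Set.Icc 1 (genus S)

/-- The left elements: the elements of `S` smaller than the Frobenius number. -/
def leftEls (S : Set ℕ) : Set ℕ := {x : ℕ | x ∈ S ∧ x < frob S}

/-- The gcd of a set of natural numbers. -/
noncomputable def setGcd (A : Set ℕ) : ℕ :=
  sInf {d : ℕ | (∀ a ∈ A, d ∣ a) ∧ ∀ e : ℕ, (∀ a ∈ A, e ∣ a) → e ∣ d}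

/-- `ω(S)`: the gcd of the left elements of `S`. -/
noncomputable def omega' (S : Set ℕ) : ℕ := setGcd (leftEls S)

/-- The shrinking of `S`: the additive submonoid of ℕ generated by the left
elements divided by their gcd. -/
noncomputable def shrink (S : Set ℕ) : Set ℕ :=
  (AddSubmonoid.closure ((fun x => x / omega' S) '' leftEls S) : AddSubmonoid ℕ)

/-- `T` is a descendant of `S`: a numerical semigroup contained in `S` all of whose
missing elements lie beyond the Frobenius number of `S`. -/
def IsDescendant (S T : Set ℕ) : Prop :=
  IsNumSgp T ∧ T ⊆ S ∧ ∀ x ∈ S \ T, frob S < x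

/-- The pseudo-ordinary semigroup `P_{m,u} = {0, m} ∪ {n : n ≥ m + u}`. -/
def P (m u : ℕ) : Set ℕ := {0, m} ∪ {n : ℕ | m + u ≤ n}

/-- The submonoid of ℕ generated by the interval `{a, …, b}`. -/
def intervalSgp (a b : ℕ) : Set ℕ := (AddSubmonoid.closure (Set.Icc a b) : AddSubmonoid ℕ)


/-!
Let `L` be a descendant of `Λ = T \ {σ}` and `f = F(L) ≥ σ > σ'`. Since `σ'` lies below
`F(Λ) = σ`, it is in `L`, and it stays a minimal generator there. Exchanging it for the largest
gap, `L' = (L \ {σ'}) ∪ {f}`, gives a numerical semigroup (every positive sum involving `f`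
exceeds `f`), with the same genus, whose missing elements from `Λ' = T \ {σ'}` all exceed
`σ' = F(Λ')`.
-/

section Frobenius

variable {S : Set ℕ}

lemma le_frob (hS : Sᶜ.Finite) {x : ℕ} (hx : x ∉ S) : x ≤ frob S :=
  le_csSup hS.bddAbove hx

lemma mem_of_frob_lt (hS : Sᶜ.Finite) {x : ℕ} (hx : frob S < x) : x ∈ S := by
  by_contra h
  exact (le_frob hS h).not_gt hx

lemma frob_notMem (hS : Sᶜ.Finite) (hpos : 0 < frob S) : frob S ∉ S := by
  have hne : Sᶜ.Nonempty := by
    by_contra h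
    rw [Set.not_nonempty_iff_eq_empty] at h
    simp [frob, h] at hpos
  exact Nat.sSup_mem hne hS.bddAbove

lemma frob_diff_singleton (hS : Sᶜ.Finite) {s : ℕ} (hs : frob S < s) :
    frob (S \ {s}) = s := by
  have hcompl : (S \ {s})ᶜ = insert s Sᶜ := by
    ext x
    simp only [Set.mem_compl_iff, Set.mem_sdiff, Set.mem_singleton_iff, Set.mem_insert_iff]
    tauto
  refine (show IsGreatest (S \ {s})ᶜ s from ?_).csSup_eq
  rw [hcompl]
  refine ⟨Set.mem_insert s _, ?_⟩
  rintro x (rfl | hx)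
  · exact le_rfl
  · exact (le_frob hS hx).trans hs.le

end Frobenius

lemma IsMinGen.mono {S T : Set ℕ} {x : ℕ} (h : IsMinGen T x) (hST : S ⊆ T) (hx : x ∈ S) :
    IsMinGen S x :=
  ⟨h.1, hx, fun ⟨a, b, ha, hb, haS, hbS, hab⟩ =>
    h.2.2 ⟨a, b, ha, hb, hST haS, hST hbS, hab⟩⟩

lemma genus_exchange {L : Set ℕ} {x y : ℕ} (hx : x ∈ L) (hy : y ∉ L) :
    genus (insert y (L \ {x})) = genus L := by
  have hcompl : (insert y (L \ {x}))ᶜ = insert x (Lᶜ \ {y}) := by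
    ext z
    simp only [Set.mem_compl_iff, Set.mem_insert_iff, Set.mem_sdiff, Set.mem_singleton_iff]
    constructor
    · rintro h
      by_cases hz : z ∈ L <;> tauto
    · rintro (rfl | ⟨hz, hzy⟩) <;> grind
  rw [genus, genus, hcompl, Set.ncard_exchange (s := Lᶜ) (fun h => h hx) hy]

lemma IsNumSgp.insert_frob_diff {L : Set ℕ} {x : ℕ} (hL : IsNumSgp L) (hx : IsMinGen L x)
    (hxf : x < frob L) : IsNumSgp (insert (frob L) (L \ {x})) := by
  set f := frob L
  refine ⟨Or.inr ⟨hL.zero_mem, hx.1.ne⟩, ?_, ?_⟩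
  · intro a b ha hb
    rcases Nat.eq_zero_or_pos a with rfl | ha0
    · simpa using hb
    rcases Nat.eq_zero_or_pos b with rfl | hb0
    · simpa using ha
    right
    by_cases hf : a = f ∨ b = f
    · have hfab : f < a + b := by rcases hf with rfl | rfl <;> omega
      exact ⟨mem_of_frob_lt hL.cofinite hfab, by rw [Set.mem_singleton_iff]; omega⟩
    · rw [not_or] at hf
      obtain ⟨haL, -⟩ : a ∈ L \ {x} := by simpa [hf.1] using ha
      obtain ⟨hbL, -⟩ : b ∈ L \ {x} := by simpa [hf.2] using hb
      exact ⟨hL.add_mem haL hbL, fun hab => hx.2.2 ⟨a, b, ha0, hb0, haL, hbL, hab⟩⟩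
  · refine (hL.cofinite.insert x).subset fun z hz => ?_
    simp only [Set.mem_compl_iff, Set.mem_insert_iff, Set.mem_sdiff, Set.mem_singleton_iff]
      at hz ⊢
    tauto

namespace IsDescendant

variable {S L : Set ℕ}

lemma compl_finite (hL : IsDescendant S L) : Sᶜ.Finite :=
  hL.1.cofinite.subset (Set.compl_subset_compl.mpr hL.2.1)

lemma mem_of_le_frob (hL : IsDescendant S L) {x : ℕ} (hx : x ∈ S) (hxf : x ≤ frob S) :
    x ∈ L := by
  by_contra h
  exact (hL.2.2 x ⟨hx, h⟩).not_ge hxf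

lemma exists_isDescendant_genus_eq {T : Set ℕ} {σ σ' : ℕ} (hσ : frob T < σ)
    (hσ' : IsRightGen T σ') (hF : frob (T \ {σ'}) < frob (T \ {σ}))
    (hL : IsDescendant (T \ {σ}) L) :
    ∃ L', IsDescendant (T \ {σ'}) L' ∧ genus L' = genus L := by
  have hT : Tᶜ.Finite := hL.compl_finite.subset (Set.compl_subset_compl.mpr Set.sdiff_subset)
  have hfrobΛ := frob_diff_singleton hT hσ
  have hfrobΛ' := frob_diff_singleton hT hσ'.2
  have hσ'σ : σ' < σ := hfrobΛ' ▸ hfrobΛ ▸ hF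
  have hLT : L ⊆ T := hL.2.1.trans Set.sdiff_subset
  have hσ'L : σ' ∈ L :=
    hL.mem_of_le_frob ⟨hσ'.1.2.1, hσ'σ.ne⟩ (by rw [hfrobΛ]; exact hσ'σ.le)
  have hσf : σ ≤ frob L := le_frob hL.1.cofinite fun h => (hL.2.1 h).2 rfl
  refine ⟨insert (frob L) (L \ {σ'}), ⟨?_, ?_, ?_⟩,
    genus_exchange hσ'L (frob_notMem hL.1.cofinite (by omega))⟩
  · exact hL.1.insert_frob_diff (hσ'.1.mono hLT hσ'L) (by omega)
  · have hfT : frob L ∈ T := mem_of_frob_lt hT (by omega)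
    exact Set.insert_subset ⟨hfT, by rw [Set.mem_singleton_iff]; omega⟩
      (Set.sdiff_subset_sdiff_left hLT)
  · rintro x ⟨⟨hxT, hxne⟩, hxL'⟩
    rw [hfrobΛ']
    by_contra! hx
    have hxσ' : x < σ' := lt_of_le_of_ne hx hxne
    have hxL : x ∈ L :=
      hL.mem_of_le_frob ⟨hxT, by rw [Set.mem_singleton_iff]; omega⟩ (by omega)
    exact hxL' (Or.inr ⟨hxL, by rw [Set.mem_singleton_iff]; omega⟩)

end IsDescendant

theorem stmt15_general (T : Set ℕ)
    (σ σ' : ℕ) (hσ : IsRightGen T σ) (hσ' : IsRightGen T σ')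
    (hF : frob (T \ {σ'}) < frob (T \ {σ}))
    (γ : ℕ) (hno : ¬ ∃ Λ'' : Set ℕ, IsDescendant (T \ {σ'}) Λ'' ∧ genus Λ'' = γ) :
    ¬ ∃ Λ'' : Set ℕ, IsDescendant (T \ {σ}) Λ'' ∧ genus Λ'' = γ := by
  rintro ⟨L, hL, rfl⟩
  exact hno (hL.exists_isDescendant_genus_eq hσ.2 hσ' hF)

/-- If `Λ = T \ {σ}` and `Λ' = T \ {σ'}` are children of a numerical semigroup `T`
with `F(Λ') < F(Λ)`, and `Λ'` has no descendant of genus `γ`, then neither does `Λ`. -/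
theorem stmt15 (T : Set ℕ) (hT : IsNumSgp T)
    (σ σ' : ℕ) (hσ : IsRightGen T σ) (hσ' : IsRightGen T σ')
    (hF : frob (T \ {σ'}) < frob (T \ {σ}))
    (γ : ℕ) (hno : ¬ ∃ Λ'' : Set ℕ, IsDescendant (T \ {σ'}) Λ'' ∧ genus Λ'' = γ) :
    ¬ ∃ Λ'' : Set ℕ, IsDescendant (T \ {σ}) Λ'' ∧ genus Λ'' = γ :=
  stmt15_general T σ σ' hσ hσ' hF γ hno

end NumSgpPaper
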